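/- Let G = (V,E) be a finite simple graph with strictly positive vertex weights w : V → ℝ>0. For each vertex v let W_v := Σ_{u∈N⁺(v)} w(u), where N⁺(v) = {v} ∪ N(v), and set x_v := w(v)/W_v. Then Σ_{{u,v}∈E} min{w(u), w(v)}·x_u·x_v ≤ (1/2)·Σ_{v∈V} w(v)·x_v; equivalently, Σ_{{u,v}∈E} min{w(u), w(v)}·w(u)·w(v)/(W_u·W_v) ≤ (1/2)·Σ_{v∈V} w(v)²/W_v. -/

import Mathlib

open Finset

/-!
Write `x_v = w(v)/W_v`. By AM–GM, `min(w_u, w_v)·x_u·x_v ≤ (w_v·x_u² + w_u·x_v²)/2`, and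
summing over ordered adjacent pairs the two halves coincide, so the ordered edge cost is at
most `Σ_u x_u² · w(N(u))`. Since `w(N(u)) ≤ W_u`, each term is at most `x_u² · W_u = w(u)·x_u`.
-/

lemma min_mul_mul_le_add_sq_div_two {a b : ℝ} (ha : 0 ≤ a) (hb : 0 ≤ b) (x y : ℝ) :
    min a b * x * y ≤ (b * x ^ 2 + a * y ^ 2) / 2 := by
  have hm : 0 ≤ min a b := le_min ha hb
  nlinarith [min_le_left a b, min_le_right a b, sq_nonneg x, sq_nonneg y,
    mul_le_mul_of_nonneg_left (two_mul_le_add_sq x y) hm]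

lemma sq_div_add_mul_le {a s : ℝ} (ha : 0 < a) (hs : 0 ≤ s) :
    (a / (a + s)) ^ 2 * s ≤ a * (a / (a + s)) :=
  calc (a / (a + s)) ^ 2 * s ≤ (a / (a + s)) ^ 2 * (a + s) := by gcongr; linarith
    _ = a * (a / (a + s)) := by field_simp

namespace SimpleGraph

variable {V M : Type*} [Fintype V] (G : SimpleGraph V) [DecidableRel G.Adj] [AddCommMonoid M]

lemma sum_sum_ite_adj_comm (f : V → V → M) :
    (∑ u, ∑ v, if G.Adj u v then f u v else 0) = ∑ u, ∑ v, if G.Adj u v then f v u else 0 := by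
  rw [Finset.sum_comm]
  simp only [G.adj_comm]

lemma sum_ite_adj_eq_sum_neighborFinset (u : V) (f : V → M) :
    (∑ v, if G.Adj u v then f v else 0) = ∑ v ∈ G.neighborFinset u, f v := by
  rw [neighborFinset_eq_filter, Finset.sum_filter]

lemma sum_sum_ite_adj_min_mul_mul_le {w : V → ℝ} (hw : ∀ v, 0 ≤ w v) (x : V → ℝ) :
    (∑ u, ∑ v, if G.Adj u v then min (w u) (w v) * x u * x v else 0) ≤
      ∑ u, x u ^ 2 * ∑ v ∈ G.neighborFinset u, w v := by
  set A := ∑ u, ∑ v, if G.Adj u v then w v * x u ^ 2 else 0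
  have hA : (∑ u, ∑ v, if G.Adj u v then w u * x v ^ 2 else 0) = A :=
    G.sum_sum_ite_adj_comm fun u v => w u * x v ^ 2
  calc (∑ u, ∑ v, if G.Adj u v then min (w u) (w v) * x u * x v else 0)
      ≤ ∑ u, ∑ v, ((if G.Adj u v then w v * x u ^ 2 else 0) +
          (if G.Adj u v then w u * x v ^ 2 else 0)) / 2 := by
        gcongr with u _ v _
        split_ifs
        · exact min_mul_mul_le_add_sq_div_two (hw u) (hw v) (x u) (x v)
        · simp
    _ = (A + A) / 2 := by simp only [← Finset.sum_div, Finset.sum_add_distrib]; rw [hA]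
    _ = A := add_self_div_two A
    _ = ∑ u, x u ^ 2 * ∑ v ∈ G.neighborFinset u, w v := by
        simp only [A, ← G.sum_ite_adj_eq_sum_neighborFinset, Finset.mul_sum, mul_ite, mul_zero,
          mul_comm]

end SimpleGraph

/-- For the weighted Caro–Wei fractional solution
`x_v = w(v)/W_v` with `W_v = Σ_{u ∈ N⁺(v)} w(u)`, the edge cost is at most half
the utility. Edge sums count each unordered edge once (half the ordered
adjacency sum). -/
theorem caro_wei_fractional_cost_bound
    {V : Type*} [Fintype V] (G : SimpleGraph V) [DecidableRel G.Adj]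
    (w : V → ℝ) (hw : ∀ v, 0 < w v) :
    (∑ u, ∑ v, if G.Adj u v then
        min (w u) (w v) * (w u / (w u + ∑ a ∈ G.neighborFinset u, w a)) *
          (w v / (w v + ∑ a ∈ G.neighborFinset v, w a))
      else 0) / 2 ≤
    (1 / 2) * ∑ v, w v * (w v / (w v + ∑ a ∈ G.neighborFinset v, w a)) := by
  rw [one_div_mul_eq_div]
  gcongr ?_ / 2
  refine (G.sum_sum_ite_adj_min_mul_mul_le (fun v => (hw v).le)
    fun v => w v / (w v + ∑ a ∈ G.neighborFinset v, w a)).trans ?_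
  exact Finset.sum_le_sum fun v _ =>
    sq_div_add_mul_le (hw v) (Finset.sum_nonneg fun a _ => (hw a).le)
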